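/- Let (A_k)_{k≥1} be d×d real matrices with nonnegative entries such that ρ(Σ_{k=1}^∞ A_k) < 1 and such that A_k ≼ C e^{−βk} for all k ≥ 1, for some nonnegative matrix C and some β > 0. Define B_k = Σ_{n=1}^∞ (A^{*n})_k and U_t = Σ_{k=t}^∞ A_k. Then there exist δ ∈ (0, β) and a nonnegative d×d matrix C′ such that Σ_{k=1}^∞ e^{δk} B_k is finite entrywise and, for all t ≥ 1, Σ_{k=1}^{t−1} B_k U_{t−k} ≼ C′ e^{−δt} entrywise. -/

import Mathlib

/-- The spectral radius of a real matrix, via its complexification. -/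
noncomputable def specRad {d : ℕ} (A : Matrix (Fin d) (Fin d) ℝ) : ENNReal :=
  spectralRadius ℂ (A.map Complex.ofReal)

/-- Convolution of two sequences of matrices: `(a*b)_t = Σ_{k=1}^{t-1} a_k b_{t-k}`. -/
noncomputable def matConv {d : ℕ} (a b : ℕ → Matrix (Fin d) (Fin d) ℝ) (t : ℕ) :
    Matrix (Fin d) (Fin d) ℝ :=
  ∑ k ∈ Finset.Ioo 0 t, a k * b (t - k)

/-- `matConvPow a n` is the `(n+1)`-fold convolution power `a^{*(n+1)}`. -/
noncomputable def matConvPow {d : ℕ} (a : ℕ → Matrix (Fin d) (Fin d) ℝ) :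
    ℕ → ℕ → Matrix (Fin d) (Fin d) ℝ
  | 0 => a
  | n + 1 => matConv a (matConvPow a n)

/-!
For small `δ > 0` the weighted sum `F_δ = Σ_k e^{δk} A_k` is close to `M = Σ_k A_k`. Since
`ρ(M) < 1`, Gelfand's formula gives a power `M^m` of norm `< 1`, and by continuity in `δ` also
`‖F_δ^m‖ < 1`, so that `Σ_n F_δ^n` converges. The weight `e^{δk}` turns convolution into matrix
multiplication: `Σ_k e^{δk} (A^{*n})_k = F_δ^n`. Hence `Σ_k e^{δk} B_k = Σ_{n≥1} F_δ^n` is finite,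
and `B_k ≼ e^{-δk} E` for a fixed matrix `E`. Together with `U_t ≼ C e^{-βt} / (1 - e^{-β})` this
bounds `Σ_k B_k U_{t-k}` by `e^{-δt}` times a geometric series in `e^{δ-β}`.
-/

open Filter Topology Finset

theorem norm_pow_mul_add_le {R : Type*} [SeminormedRing R] (x : R) (m q s : ℕ) :
    ‖x ^ (m * q + s)‖ ≤ ‖x ^ m‖ ^ q * ‖x ^ s‖ := by
  induction q with
  | zero => simp
  | succ q ih =>
    calc ‖x ^ (m * (q + 1) + s)‖ = ‖x ^ m * x ^ (m * q + s)‖ := by rw [← pow_add]; ring_nf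
      _ ≤ ‖x ^ m‖ * (‖x ^ m‖ ^ q * ‖x ^ s‖) :=
        (norm_mul_le _ _).trans (mul_le_mul_of_nonneg_left ih (norm_nonneg _))
      _ = ‖x ^ m‖ ^ (q + 1) * ‖x ^ s‖ := by ring

theorem summable_norm_pow_of_norm_pow_lt_one {R : Type*} [SeminormedRing R] {x : R} {m : ℕ}
    (hm : 0 < m) (h : ‖x ^ m‖ < 1) : Summable fun n => ‖x ^ n‖ := by
  have : NeZero m := ⟨hm.ne'⟩
  have hgeom : Summable fun q : ℕ => ‖‖x ^ m‖ ^ q‖ := by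
    simpa [abs_of_nonneg] using summable_geometric_of_lt_one (norm_nonneg _) h
  rw [← (Nat.divModEquiv m).symm.summable_iff]
  refine Summable.of_nonneg_of_le (fun _ => norm_nonneg _) (fun p => ?_)
    (summable_mul_of_summable_norm (f := fun q : ℕ => ‖x ^ m‖ ^ q)
      (g := fun s : Fin m => ‖x ^ (s : ℕ)‖) hgeom Summable.of_finite)
  simpa [Nat.divModEquiv, add_comm, mul_comm] using norm_pow_mul_add_le x m p.1 p.2

theorem eventually_norm_pow_lt_one_of_spectralRadius_lt_one {A : Type*} [NormedRing A]
    [NormedAlgebra ℂ A] [CompleteSpace A] {a : A} (h : spectralRadius ℂ a < 1) :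
    ∀ᶠ n in atTop, ‖a ^ n‖ < 1 := by
  have hgelfand :=
    (spectrum.pow_nnnorm_pow_one_div_tendsto_nhds_spectralRadius a).eventually_lt_const h
  filter_upwards [hgelfand, eventually_gt_atTop 0] with n hn hpos
  have : (‖a ^ n‖₊ : ENNReal) < 1 := by
    by_contra! hge
    exact hn.not_ge (ENNReal.one_le_rpow hge (by positivity))
  exact_mod_cast this

theorem Matrix.tsum_apply {ι m n α : Type*} [AddCommMonoid α] [TopologicalSpace α] [T2Space α]
    {f : ι → Matrix m n α} (hf : Summable f) (i : m) (j : n) :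
    (∑' x, f x) i j = ∑' x, f x i j :=
  (congrFun (_root_.tsum_apply hf) j).trans (_root_.tsum_apply (Pi.summable.1 hf i))

theorem Matrix.tsum_apply_nonneg {ι m n : Type*} {f : ι → Matrix m n ℝ}
    (hf : ∀ x i j, 0 ≤ f x i j) (i : m) (j : n) : 0 ≤ (∑' x, f x) i j := by
  by_cases hs : Summable f
  · rw [Matrix.tsum_apply hs]
    exact tsum_nonneg fun x => hf x i j
  · simp [tsum_eq_zero_of_not_summable hs]

theorem Matrix.mul_apply_le_mul_apply {l m n : Type*} [Fintype m] {X X' : Matrix l m ℝ}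
    {Y Y' : Matrix m n ℝ} (hX : ∀ i j, 0 ≤ X i j) (hY : ∀ i j, 0 ≤ Y i j)
    (hXX' : ∀ i j, X i j ≤ X' i j) (hYY' : ∀ i j, Y i j ≤ Y' i j) (i : l) (j : n) :
    (X * Y) i j ≤ (X' * Y') i j := by
  simp only [Matrix.mul_apply]
  exact sum_le_sum fun l _ =>
    mul_le_mul (hXX' i l) (hYY' l j) (hY l j) ((hX i l).trans (hXX' i l))

section Convolution

variable {d : ℕ}

theorem matConv_zero (a b : ℕ → Matrix (Fin d) (Fin d) ℝ) : matConv a b 0 = 0 := by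
  simp [matConv]

theorem matConvPow_zero_right {a : ℕ → Matrix (Fin d) (Fin d) ℝ} (ha : a 0 = 0) (n : ℕ) :
    matConvPow a n 0 = 0 := by
  cases n with
  | zero => exact ha
  | succ n => exact matConv_zero _ _

theorem matConv_eq_sum_antidiagonal {a b : ℕ → Matrix (Fin d) (Fin d) ℝ} (ha : a 0 = 0)
    (hb : b 0 = 0) (t : ℕ) : matConv a b t = ∑ p ∈ antidiagonal t, a p.1 * b p.2 := by
  rw [Nat.sum_antidiagonal_eq_sum_range_succ_mk, matConv]
  refine sum_subset (fun k hk => by simp only [mem_Ioo, mem_range] at hk ⊢; omega)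
    fun k hk hk' => ?_
  obtain rfl | rfl : k = 0 ∨ k = t := by simp only [mem_Ioo, mem_range] at hk hk'; omega
  · simp [ha]
  · simp [hb]

theorem pow_smul_matConv (r : ℝ) (a b : ℕ → Matrix (Fin d) (Fin d) ℝ) (t : ℕ) :
    r ^ t • matConv a b t = matConv (fun k => r ^ k • a k) (fun k => r ^ k • b k) t := by
  rw [matConv, matConv, smul_sum]
  refine sum_congr rfl fun k hk => ?_
  rw [smul_mul_smul, ← pow_add, Nat.add_sub_cancel' (mem_Ioo.1 hk).2.le]

theorem matConvPow_nonneg {a : ℕ → Matrix (Fin d) (Fin d) ℝ} (ha : ∀ k i j, 0 ≤ a k i j)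
    (n k : ℕ) (i j : Fin d) : 0 ≤ matConvPow a n k i j := by
  induction n generalizing k i j with
  | zero => exact ha k i j
  | succ n ih =>
    simp only [matConvPow, matConv, Matrix.sum_apply, Matrix.mul_apply]
    exact sum_nonneg fun u _ => sum_nonneg fun l _ => mul_nonneg (ha u i l) (ih _ l j)

end Convolution

section LinftyOpNorm

-- The ℓ∞-operator norm is submultiplicative and monotone in the absolute values of the entries.
attribute [local instance] Matrix.linftyOpNormedAddCommGroup Matrix.linftyOpNormedSpace
  Matrix.linftyOpNormedRing Matrix.linftyOpNormedAlgebra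

variable {d : ℕ}

theorem Matrix.linfty_opNorm_map_ofReal {m n : Type*} [Fintype m] [Fintype n]
    (X : Matrix m n ℝ) :
    ‖X.map Complex.ofReal‖ = ‖X‖ := by
  simp [Matrix.linfty_opNorm_def]

theorem exists_norm_pow_lt_one_of_specRad_lt_one {M : Matrix (Fin d) (Fin d) ℝ}
    (h : specRad M < 1) : ∃ m, 0 < m ∧ ‖M ^ m‖ < 1 := by
  obtain ⟨m, hm, hpos⟩ :=
    ((eventually_norm_pow_lt_one_of_spectralRadius_lt_one h).and (eventually_gt_atTop 0)).exists
  refine ⟨m, hpos, ?_⟩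
  rwa [← Matrix.linfty_opNorm_map_ofReal, show (M ^ m).map Complex.ofReal = _ from
    Matrix.map_pow M Complex.ofRealHom m]

theorem Matrix.linfty_opNorm_le_of_abs_le {m n : Type*} [Fintype m] [Fintype n]
    {X Y : Matrix m n ℝ} (h : ∀ i j, |X i j| ≤ Y i j) : ‖X‖ ≤ ‖Y‖ := by
  rw [Matrix.linfty_opNorm_def, Matrix.linfty_opNorm_def, NNReal.coe_le_coe]
  refine Finset.sup_mono_fun fun i _ => sum_le_sum fun j _ => ?_
  rw [← NNReal.coe_le_coe, coe_nnnorm, coe_nnnorm, Real.norm_eq_abs, Real.norm_eq_abs]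
  exact (h i j).trans (le_abs_self _)

theorem hasSum_matConv {a b : ℕ → Matrix (Fin d) (Fin d) ℝ} (ha0 : a 0 = 0) (hb0 : b 0 = 0)
    (ha : Summable fun k => ‖a k‖) (hb : Summable fun k => ‖b k‖) :
    (Summable fun t => ‖matConv a b t‖) ∧ HasSum (matConv a b) ((∑' k, a k) * ∑' k, b k) := by
  rw [funext (matConv_eq_sum_antidiagonal ha0 hb0)]
  have hsum := summable_norm_sum_mul_antidiagonal_of_summable_norm ha hb
  have hcauchy := hsum.of_norm.hasSum
  rw [← tsum_mul_tsum_eq_tsum_sum_antidiagonal_of_summable_norm ha hb] at hcauchy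
  exact ⟨hsum, hcauchy⟩

theorem hasSum_pow_smul_matConvPow {a : ℕ → Matrix (Fin d) (Fin d) ℝ} (ha0 : a 0 = 0) {r : ℝ}
    (ha : Summable fun k => ‖r ^ k • a k‖) (n : ℕ) :
    (Summable fun k => ‖r ^ k • matConvPow a n k‖) ∧
      HasSum (fun k => r ^ k • matConvPow a n k) ((∑' k, r ^ k • a k) ^ (n + 1)) := by
  induction n with
  | zero => exact ⟨ha, by rw [pow_one]; exact ha.of_norm.hasSum⟩
  | succ n ih =>
    obtain ⟨hnorm, hsum⟩ := hasSum_matConv (a := fun k => r ^ k • a k)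
      (b := fun k => r ^ k • matConvPow a n k) (by simp [ha0])
      (by simp [matConvPow_zero_right ha0]) ha ih.1
    rw [ih.2.tsum_eq, ← pow_succ'] at hsum
    simp only [matConvPow, pow_smul_matConv]
    exact ⟨hnorm, hsum⟩

theorem summable_pow_smul_tsum_matConvPow {a : ℕ → Matrix (Fin d) (Fin d) ℝ} (ha0 : a 0 = 0)
    (hann : ∀ k i j, 0 ≤ a k i j) {r : ℝ} (hr : 0 ≤ r) (ha : Summable fun k => ‖r ^ k • a k‖)
    (hF : Summable fun n => ‖(∑' k, r ^ k • a k) ^ n‖) :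
    Summable fun k => r ^ k • ∑' n, matConvPow a n k := by
  set g : ℕ × ℕ → Matrix (Fin d) (Fin d) ℝ := fun p => r ^ p.2 • matConvPow a p.1 p.2
  have hrow n : HasSum (fun k => g (n, k)) ((∑' k, r ^ k • a k) ^ (n + 1)) :=
    (hasSum_pow_smul_matConvPow ha0 ha n).2
  have hcol : Summable fun n => (∑' k, r ^ k • a k) ^ (n + 1) :=
    (summable_nat_add_iff 1).2 hF.of_norm
  have hg : Summable g := by
    refine Pi.summable.2 fun i => Pi.summable.2 fun j => ?_
    refine (summable_prod_of_nonneg fun p => ?_).2 ⟨fun n => ?_, ?_⟩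
    · exact mul_nonneg (pow_nonneg hr _) (matConvPow_nonneg hann _ _ _ _)
    · exact (Pi.hasSum.1 (Pi.hasSum.1 (hrow n) i) j).summable
    · simp only [fun n => (Pi.hasSum.1 (Pi.hasSum.1 (hrow n) i) j).tsum_eq]
      exact Pi.summable.1 (Pi.summable.1 hcol i) j
  simpa [g, tsum_const_smul''] using hg.prod_symm.prod

theorem norm_exp_pow_smul_le {A : ℕ → Matrix (Fin d) (Fin d) ℝ} (hA0 : A 0 = 0)
    (hAnn : ∀ k i j, 0 ≤ A k i j) {β : ℝ} {C : Matrix (Fin d) (Fin d) ℝ}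
    (hdom : ∀ k : ℕ, 1 ≤ k → ∀ i j, A k i j ≤ C i j * Real.exp (-β * k)) (δ : ℝ) (k : ℕ) :
    ‖Real.exp δ ^ k • A k‖ ≤ ‖C‖ * Real.exp (δ - β) ^ k := by
  rcases Nat.eq_zero_or_pos k with rfl | hk
  · simp [hA0]
  have hexp : Real.exp δ ^ k * Real.exp (-β * k) = Real.exp (δ - β) ^ k := by
    rw [mul_comm (-β), Real.exp_nat_mul, ← mul_pow, ← Real.exp_add, sub_eq_add_neg]
  calc ‖Real.exp δ ^ k • A k‖ ≤ ‖Real.exp (δ - β) ^ k • C‖ := by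
        refine Matrix.linfty_opNorm_le_of_abs_le fun i j => ?_
        rw [Matrix.smul_apply, Matrix.smul_apply, smul_eq_mul, smul_eq_mul, abs_of_nonneg
          (mul_nonneg (by positivity) (hAnn k i j)), ← hexp, mul_assoc, mul_comm _ (C i j)]
        exact mul_le_mul_of_nonneg_left (hdom k hk i j) (by positivity)
    _ = ‖C‖ * Real.exp (δ - β) ^ k := by
        rw [norm_smul, Real.norm_of_nonneg (by positivity), mul_comm]

theorem exists_norm_tsum_exp_pow_smul_pow_lt_one {A : ℕ → Matrix (Fin d) (Fin d) ℝ}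
    (hA0 : A 0 = 0) (hAnn : ∀ k i j, 0 ≤ A k i j) {β : ℝ} (hβ : 0 < β)
    {C : Matrix (Fin d) (Fin d) ℝ}
    (hdom : ∀ k : ℕ, 1 ≤ k → ∀ i j, A k i j ≤ C i j * Real.exp (-β * k)) {m : ℕ}
    (hm : ‖(∑' k, A k) ^ m‖ < 1) :
    ∃ δ, 0 < δ ∧ δ < β ∧ ‖(∑' k, Real.exp δ ^ k • A k) ^ m‖ < 1 := by
  have hq : Real.exp (-(β / 2)) < 1 := Real.exp_lt_one_iff.2 (by linarith)
  have hcont : ContinuousOn (fun δ => ∑' k, Real.exp δ ^ k • A k) (Set.Iic (β / 2)) := by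
    refine continuousOn_tsum
      (fun k => ((Real.continuous_exp.pow k).smul continuous_const).continuousOn)
      ((summable_geometric_of_lt_one (Real.exp_pos _).le hq).mul_left ‖C‖) fun k δ hδ => ?_
    refine (norm_exp_pow_smul_le hA0 hAnn hdom δ k).trans
      (mul_le_mul_of_nonneg_left (pow_le_pow_left₀ (Real.exp_pos _).le ?_ k) (norm_nonneg _))
    exact Real.exp_le_exp.2 (by simp only [Set.mem_Iic] at hδ; linarith)
  have hlt : ∀ᶠ δ in 𝓝 (0 : ℝ), ‖(∑' k, Real.exp δ ^ k • A k) ^ m‖ < 1 := by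
    refine ((hcont.continuousAt (Iic_mem_nhds (by linarith))).pow m).norm.eventually_lt_const ?_
    simpa using hm
  exact ((hlt.filter_mono nhdsWithin_le_nhds).and (Ioo_mem_nhdsGT hβ)).exists.imp
    fun δ ⟨h, hδ⟩ => ⟨hδ.1, hδ.2, h⟩

theorem exists_summable_exp_mul_tsum_matConvPow {A : ℕ → Matrix (Fin d) (Fin d) ℝ}
    (hA0 : A 0 = 0) (hAnn : ∀ k i j, 0 ≤ A k i j) (hρ : specRad (∑' k, A k) < 1) {β : ℝ}
    (hβ : 0 < β) {C : Matrix (Fin d) (Fin d) ℝ}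
    (hdom : ∀ k : ℕ, 1 ≤ k → ∀ i j, A k i j ≤ C i j * Real.exp (-β * k)) :
    ∃ δ, 0 < δ ∧ δ < β ∧
      ∀ i j, Summable fun k : ℕ => Real.exp (δ * k) * (∑' n, matConvPow A n k) i j := by
  obtain ⟨m, hm, hMm⟩ := exists_norm_pow_lt_one_of_specRad_lt_one hρ
  obtain ⟨δ, hδ, hδβ, hFm⟩ := exists_norm_tsum_exp_pow_smul_pow_lt_one hA0 hAnn hβ hdom hMm
  have hA : Summable fun k => ‖Real.exp δ ^ k • A k‖ :=
    .of_nonneg_of_le (fun _ => norm_nonneg _) (norm_exp_pow_smul_le hA0 hAnn hdom δ)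
      ((summable_geometric_of_lt_one (Real.exp_pos _).le
        (Real.exp_lt_one_iff.2 (by linarith))).mul_left _)
  have hB := summable_pow_smul_tsum_matConvPow hA0 hAnn (Real.exp_pos δ).le hA
    (summable_norm_pow_of_norm_pow_lt_one hm hFm)
  refine ⟨δ, hδ, hδβ, fun i j => ?_⟩
  simpa [← Real.exp_nat_mul, mul_comm] using Pi.summable.1 (Pi.summable.1 hB i) j

end LinftyOpNorm

theorem tsum_nat_add_apply_le {d : ℕ} {A : ℕ → Matrix (Fin d) (Fin d) ℝ}
    (hAnn : ∀ k i j, 0 ≤ A k i j) {β : ℝ} (hβ : 0 < β) {C : Matrix (Fin d) (Fin d) ℝ}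
    (hdom : ∀ k : ℕ, 1 ≤ k → ∀ i j, A k i j ≤ C i j * Real.exp (-β * k)) {t : ℕ} (ht : 1 ≤ t)
    (i j : Fin d) :
    (∑' k, A (t + k)) i j ≤ (1 - Real.exp (-β))⁻¹ * Real.exp (-β * t) * C i j := by
  have hq : Real.exp (-β) < 1 := Real.exp_lt_one_iff.2 (by linarith)
  have hgeom (i j : Fin d) :
      Summable fun k : ℕ => C i j * Real.exp (-β * t) * Real.exp (-β) ^ k :=
    (summable_geometric_of_lt_one (Real.exp_pos _).le hq).mul_left _
  have hterm (i j : Fin d) (k : ℕ) :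
      A (t + k) i j ≤ C i j * Real.exp (-β * t) * Real.exp (-β) ^ k := by
    refine (hdom (t + k) (by omega) i j).trans_eq ?_
    rw [mul_assoc, ← Real.exp_nat_mul, ← Real.exp_add]
    push_cast
    ring_nf
  have hsum : Summable fun k => A (t + k) := Pi.summable.2 fun i => Pi.summable.2 fun j =>
    .of_nonneg_of_le (fun k => hAnn _ i j) (hterm i j) (hgeom i j)
  rw [Matrix.tsum_apply hsum]
  refine (Summable.tsum_le_tsum (hterm i j) (Pi.summable.1 (Pi.summable.1 hsum i) j)
    (hgeom i j)).trans_eq ?_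
  rw [tsum_mul_left, tsum_geometric_of_lt_one (Real.exp_pos _).le hq]
  ring

theorem sum_Ioo_pow_sub_le {q : ℝ} (hq0 : 0 ≤ q) (hq1 : q < 1) (t : ℕ) :
    ∑ k ∈ Ioo 0 t, q ^ (t - k) ≤ (1 - q)⁻¹ := by
  rw [← sum_image (g := (t - ·)) (f := (q ^ ·)) fun a ha b hb h => by
    simp only [coe_Ioo, Set.mem_Ioo] at ha hb h; omega]
  exact (summable_geometric_of_lt_one hq0 hq1).sum_le_tsum _ (fun _ _ => by positivity)
    |>.trans_eq (tsum_geometric_of_lt_one hq0 hq1)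

theorem sum_Ioo_mul_apply_le_of_exp_decay {d : ℕ} {B U : ℕ → Matrix (Fin d) (Fin d) ℝ}
    {E C : Matrix (Fin d) (Fin d) ℝ} {δ β K : ℝ} (hδβ : δ < β) (hK : 0 ≤ K)
    (hB : ∀ k i j, 0 ≤ B k i j) (hU : ∀ s i j, 0 ≤ U s i j) (hEC : ∀ i j, 0 ≤ (E * C) i j)
    (hBE : ∀ k i j, B k i j ≤ Real.exp (-δ * k) * E i j)
    (hUC : ∀ s : ℕ, 1 ≤ s → ∀ i j, U s i j ≤ K * Real.exp (-β * s) * C i j) (t : ℕ) (i j : Fin d) :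
    (∑ k ∈ Ioo 0 t, B k * U (t - k)) i j ≤
      K * (1 - Real.exp (δ - β))⁻¹ * (E * C) i j * Real.exp (-δ * t) := by
  have hterm : ∀ k ∈ Ioo 0 t, (B k * U (t - k)) i j ≤
      K * Real.exp (-δ * t) * (E * C) i j * Real.exp (δ - β) ^ (t - k) := by
    intro k hk
    have hkt : k < t := (mem_Ioo.1 hk).2
    refine (Matrix.mul_apply_le_mul_apply (hB k) (hU _) (X' := Real.exp (-δ * k) • E)
      (Y' := (K * Real.exp (-β * ↑(t - k))) • C) (hBE k) (hUC _ (by omega)) i j).trans_eq ?_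
    rw [Matrix.smul_mul, Matrix.mul_smul, Matrix.smul_apply, Matrix.smul_apply, smul_eq_mul,
      smul_eq_mul, ← Real.exp_nat_mul, Nat.cast_sub hkt.le]
    have : Real.exp (-δ * k) * Real.exp (-β * (t - k)) =
        Real.exp (-δ * t) * Real.exp ((t - k) * (δ - β)) := by
      rw [← Real.exp_add, ← Real.exp_add]; ring_nf
    linear_combination K * (E * C) i j * this
  rw [Matrix.sum_apply]
  refine (sum_le_sum hterm).trans ?_
  rw [← mul_sum]
  calc K * Real.exp (-δ * t) * (E * C) i j * ∑ k ∈ Ioo 0 t, Real.exp (δ - β) ^ (t - k)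
      ≤ K * Real.exp (-δ * t) * (E * C) i j * (1 - Real.exp (δ - β))⁻¹ :=
        mul_le_mul_of_nonneg_left (sum_Ioo_pow_sub_le (Real.exp_pos _).le
          (Real.exp_lt_one_iff.2 (by linarith)) t) (by have := hEC i j; positivity)
    _ = K * (1 - Real.exp (δ - β))⁻¹ * (E * C) i j * Real.exp (-δ * t) := by ring

theorem apply_le_exp_neg_mul_tsum {d : ℕ} {B : ℕ → Matrix (Fin d) (Fin d) ℝ}
    (hB : ∀ k i j, 0 ≤ B k i j) {δ : ℝ}
    (hs : ∀ i j, Summable fun k : ℕ => Real.exp (δ * k) * B k i j) (k : ℕ) (i j : Fin d) :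
    B k i j ≤ Real.exp (-δ * k) * ∑' k' : ℕ, Real.exp (δ * k') * B k' i j := by
  calc B k i j = Real.exp (-δ * k) * (Real.exp (δ * k) * B k i j) := by
        rw [← mul_assoc, ← Real.exp_add, neg_mul, neg_add_cancel, Real.exp_zero, one_mul]
    _ ≤ _ := mul_le_mul_of_nonneg_left
        ((hs i j).le_tsum k fun k' _ => mul_nonneg (Real.exp_pos _).le (hB k' i j)) (by positivity)

theorem stmt7_general {d : ℕ} (A : ℕ → Matrix (Fin d) (Fin d) ℝ)
    (hA0 : A 0 = 0) (hAnn : ∀ k i j, 0 ≤ A k i j) (hρ : specRad (∑' k, A k) < 1)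
    (β : ℝ) (hβ : 0 < β) (C : Matrix (Fin d) (Fin d) ℝ) (hC : ∀ i j, 0 ≤ C i j)
    (hdom : ∀ k : ℕ, 1 ≤ k → ∀ i j, A k i j ≤ C i j * Real.exp (-β * k))
    (B : ℕ → Matrix (Fin d) (Fin d) ℝ) (hB : ∀ k, B k = ∑' n : ℕ, matConvPow A n k)
    (U : ℕ → Matrix (Fin d) (Fin d) ℝ) (hU : ∀ t, U t = ∑' k : ℕ, A (t + k)) :
    ∃ δ : ℝ, 0 < δ ∧ δ < β ∧ ∃ C' : Matrix (Fin d) (Fin d) ℝ, (∀ i j, 0 ≤ C' i j) ∧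
      (∀ i j, Summable (fun k : ℕ => Real.exp (δ * k) * B k i j)) ∧
      (∀ t : ℕ, 1 ≤ t → ∀ i j,
        (∑ k ∈ Finset.Ioo 0 t, B k * U (t - k)) i j ≤ C' i j * Real.exp (-δ * t)) := by
  obtain ⟨δ, hδ, hδβ, hBsum⟩ := exists_summable_exp_mul_tsum_matConvPow hA0 hAnn hρ hβ hdom
  simp only [← hB] at hBsum
  have hBnn k : ∀ i j, 0 ≤ B k i j :=
    hB k ▸ Matrix.tsum_apply_nonneg fun n => matConvPow_nonneg hAnn n k
  have hUnn s : ∀ i j, 0 ≤ U s i j := hU s ▸ Matrix.tsum_apply_nonneg fun k => hAnn (s + k)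
  set E : Matrix (Fin d) (Fin d) ℝ := Matrix.of fun i j => ∑' k : ℕ, Real.exp (δ * k) * B k i j
  have hECnn i j : 0 ≤ (E * C) i j := by
    rw [Matrix.mul_apply]
    exact sum_nonneg fun l _ => mul_nonneg
      (tsum_nonneg fun k => mul_nonneg (Real.exp_pos _).le (hBnn k i l)) (hC l j)
  set K := (1 - Real.exp (-β))⁻¹
  have hK : 0 ≤ K := inv_nonneg.2 (sub_nonneg.2 (Real.exp_le_one_iff.2 (by linarith)))
  refine ⟨δ, hδ, hδβ, (K * (1 - Real.exp (δ - β))⁻¹) • (E * C), fun i j => ?_, hBsum,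
    fun t _ i j => ?_⟩
  · exact mul_nonneg (mul_nonneg hK (inv_nonneg.2 (sub_nonneg.2
      (Real.exp_le_one_iff.2 (by linarith))))) (hECnn i j)
  · rw [Matrix.smul_apply, smul_eq_mul]
    refine sum_Ioo_mul_apply_le_of_exp_decay hδβ hK hBnn hUnn hECnn
      (apply_le_exp_neg_mul_tsum hBnn hBsum) (fun s hs i j => ?_) t i j
    rw [hU]
    exact tsum_nat_add_apply_le hAnn hβ hdom hs i j

/-- Exponentially dominated kernels: if the nonnegative matrices `(A_k)_{k≥1}` satisfy
`ρ(Σ A_k) < 1` and `A_k ≼ C e^{−βk}`, then with `B_k = Σ_{n≥1} (A^{*n})_k` and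
`U_t = Σ_{k≥t} A_k`, there exist `δ ∈ (0, β)` and a nonnegative matrix `C'` such that
`Σ_k e^{δk} B_k` is finite entrywise and `Σ_{k=1}^{t−1} B_k U_{t−k} ≼ C' e^{−δt}` for all
`t ≥ 1`.  The family `(A_k)_{k≥1}` is encoded with `A 0 = 0`. -/
theorem stmt7 {d : ℕ} (A : ℕ → Matrix (Fin d) (Fin d) ℝ)
    (hA0 : A 0 = 0) (hAnn : ∀ k i j, 0 ≤ A k i j) (hAsum : Summable A)
    (hρ : specRad (∑' k, A k) < 1)
    (β : ℝ) (hβ : 0 < β) (C : Matrix (Fin d) (Fin d) ℝ) (hC : ∀ i j, 0 ≤ C i j)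
    (hdom : ∀ k : ℕ, 1 ≤ k → ∀ i j, A k i j ≤ C i j * Real.exp (-β * k))
    (B : ℕ → Matrix (Fin d) (Fin d) ℝ) (hB : ∀ k, B k = ∑' n : ℕ, matConvPow A n k)
    (U : ℕ → Matrix (Fin d) (Fin d) ℝ) (hU : ∀ t, U t = ∑' k : ℕ, A (t + k)) :
    ∃ δ : ℝ, 0 < δ ∧ δ < β ∧ ∃ C' : Matrix (Fin d) (Fin d) ℝ, (∀ i j, 0 ≤ C' i j) ∧
      (∀ i j, Summable (fun k : ℕ => Real.exp (δ * k) * B k i j)) ∧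
      (∀ t : ℕ, 1 ≤ t → ∀ i j,
        (∑ k ∈ Finset.Ioo 0 t, B k * U (t - k)) i j ≤ C' i j * Real.exp (-δ * t)) :=
  stmt7_general A hA0 hAnn hρ β hβ C hC hdom B hB U hU
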